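/- Let K be a field with a valuation ν whose residue characteristic is not 2 (i.e., char K ≠ 2 and ν(2) = 0), let F be a subfield of K, let V be a K-vector space, m > 0, and let ω : V → ℝ ∪ {∞} satisfy (1) ω(x) = ∞ iff x = 0, (2) ω(x·l) = ω(x) + m·ν(l), and (3) ω(−x) = ω(x) and ω(x + y) ≥ min(ω(x), ω(y)); let d(x,y) := 2^{−ω(x−y)}. Let σ : V → V be an F-linear map with σ ∘ σ = id and ω(σ(x)) = ω(x) for all x ∈ V, and set V_σ := {v ∈ V : σ(v) = v}. If (V, d) satisfies (MC′), then the metric subspace (V_σ, d|_{V_σ}) satisfies (MC′). -/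

import Mathlib

/-!
The balls of `V_σ` are nested, but the balls of `V` with the same centres and radii need not be,
since the radii need not decrease. In an ultrametric space, shrinking each radius to the minimum
of the radii so far makes them nested without losing any point of `V_σ`, and (MC′) for `V` gives a
point `x` in all of them. Its symmetrization `x' = (x + σ x) / 2` lies in `V_σ` and is at least as
close as `x` to every `a ∈ V_σ`: `a - x' = ((a - x) + σ (a - x)) / 2`, and `ω(1/2) = 0`, `ω ∘ σ = ω`.
-/

/-- `2 ^ (-a)` for `a ∈ ℝ ∪ {∞}`, with the convention `2 ^ (-∞) = 0`. -/
noncomputable def toDist (a : WithTop ℝ) : ℝ :=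
  WithTop.recTopCoe 0 (fun r : ℝ => (2 : ℝ) ^ (-r)) a

/-- Property (MC′) for a distance function `d` on `X`: every nested sequence of c-balls
(closed balls of positive radius) has nonempty intersection. -/
def MCprime {X : Type*} (d : X → X → ℝ) : Prop :=
  ∀ (c : ℕ → X) (r : ℕ → ℝ),
    (∀ n, 0 < r n) →
    (∀ n, {y | d (c (n + 1)) y ≤ r (n + 1)} ⊆ {y | d (c n) y ≤ r n}) →
    (⋂ n, {y | d (c n) y ≤ r n}).Nonempty

/-- Property (MC′) for the metric subspace on `A ⊆ X` induced by `d`. -/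
def MCprimeOn {X : Type*} (d : X → X → ℝ) (A : Set X) : Prop :=
  ∀ (c : ℕ → X) (r : ℕ → ℝ),
    (∀ n, c n ∈ A) → (∀ n, 0 < r n) →
    (∀ n, {y ∈ A | d (c (n + 1)) y ≤ r (n + 1)} ⊆ {y ∈ A | d (c n) y ≤ r n}) →
    (⋂ n, {y ∈ A | d (c n) y ≤ r n}).Nonempty

lemma toDist_antitone : Antitone toDist := by
  intro a b h
  induction a using WithTop.recTopCoe with
  | top => simp [top_le_iff.mp h]
  | coe s =>
    induction b using WithTop.recTopCoe with
    | top => exact (Real.rpow_pos_of_pos two_pos (-s)).le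
    | coe t =>
      have hst : s ≤ t := by exact_mod_cast h
      exact Real.rpow_le_rpow_of_exponent_le one_le_two (neg_le_neg hst)

section PrefixMin

def prefixMin (r : ℕ → ℝ) (n : ℕ) : ℝ := (Finset.range (n + 1)).inf' Finset.nonempty_range_add_one r

variable {r : ℕ → ℝ}

lemma prefixMin_le {k n : ℕ} (hkn : k ≤ n) : prefixMin r n ≤ r k :=
  Finset.inf'_le r (Finset.mem_range_succ_iff.mpr hkn)

lemma le_prefixMin {n : ℕ} {x : ℝ} (h : ∀ k ≤ n, x ≤ r k) : x ≤ prefixMin r n :=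
  Finset.le_inf' _ r fun k hk => h k (Finset.mem_range_succ_iff.mp hk)

lemma prefixMin_pos (hr : ∀ n, 0 < r n) (n : ℕ) : 0 < prefixMin r n :=
  (Finset.lt_inf'_iff _).mpr fun k _ => hr k

lemma prefixMin_succ_le (n : ℕ) : prefixMin r (n + 1) ≤ prefixMin r n :=
  le_prefixMin fun _ hk => prefixMin_le (hk.trans n.le_succ)

end PrefixMin

section Ultrametric

variable {X : Type*} {d : X → X → ℝ} {A : Set X} {c : ℕ → X} {r : ℕ → ℝ}

lemma dist_centers_le_of_nested (hself : ∀ x, d x x = 0) (hcA : ∀ n, c n ∈ A)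
    (hr : ∀ n, 0 < r n)
    (hnest : ∀ n, {y ∈ A | d (c (n + 1)) y ≤ r (n + 1)} ⊆ {y ∈ A | d (c n) y ≤ r n})
    {k n : ℕ} (hkn : k ≤ n) : d (c k) (c n) ≤ r k :=
  (antitone_nat_of_succ_le (f := fun n => {y ∈ A | d (c n) y ≤ r n}) hnest hkn
    ⟨hcA n, (hself (c n)).trans_le (hr n).le⟩).2

lemma closedBalls_prefixMin_nested (hself : ∀ x, d x x = 0) (hsymm : ∀ x y, d x y = d y x)
    (hultra : ∀ x y z, d x z ≤ max (d x y) (d y z)) (hcA : ∀ n, c n ∈ A) (hr : ∀ n, 0 < r n)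
    (hnest : ∀ n, {y ∈ A | d (c (n + 1)) y ≤ r (n + 1)} ⊆ {y ∈ A | d (c n) y ≤ r n}) (n : ℕ) :
    {y | d (c (n + 1)) y ≤ prefixMin r (n + 1)} ⊆ {y | d (c n) y ≤ prefixMin r n} := by
  have hcenter : d (c n) (c (n + 1)) ≤ prefixMin r n := le_prefixMin fun k hk =>
    calc d (c n) (c (n + 1)) ≤ max (d (c k) (c n)) (d (c k) (c (n + 1))) :=
          hsymm (c k) (c n) ▸ hultra _ _ _
      _ ≤ r k := max_le (dist_centers_le_of_nested hself hcA hr hnest hk)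
          (dist_centers_le_of_nested hself hcA hr hnest (hk.trans n.le_succ))
  intro y hy
  exact (hultra _ (c (n + 1)) y).trans
    (max_le hcenter (hy.out.trans (prefixMin_succ_le n)))

theorem MCprimeOn_of_retraction (hself : ∀ x, d x x = 0) (hsymm : ∀ x y, d x y = d y x)
    (hultra : ∀ x y z, d x z ≤ max (d x y) (d y z)) (p : X → X) (hpA : ∀ x, p x ∈ A)
    (hp : ∀ a ∈ A, ∀ x, d a (p x) ≤ d a x) (hMC : MCprime d) : MCprimeOn d A := by
  intro c r hcA hr hnest
  obtain ⟨x, hx⟩ := hMC c (prefixMin r) (prefixMin_pos hr)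
    (closedBalls_prefixMin_nested hself hsymm hultra hcA hr hnest)
  refine ⟨p x, Set.mem_iInter.mpr fun n => ⟨hpA x, ?_⟩⟩
  exact (hp _ (hcA n) x).trans ((Set.mem_iInter.mp hx n).out.trans (prefixMin_le le_rfl))

end Ultrametric

section ValuedSpace

variable {V : Type*} [AddCommGroup V] {ω : V → WithTop ℝ}

lemma toDist_sub_self (hω0 : ω 0 = ⊤) (x : V) : toDist (ω (x - x)) = 0 := by
  rw [sub_self, hω0]; rfl

lemma toDist_sub_comm (hneg : ∀ x, ω (-x) = ω x) (x y : V) :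
    toDist (ω (x - y)) = toDist (ω (y - x)) := by
  rw [← neg_sub, hneg]

lemma toDist_sub_le_max (hadd : ∀ x y, min (ω x) (ω y) ≤ ω (x + y)) (x y z : V) :
    toDist (ω (x - z)) ≤ max (toDist (ω (x - y))) (toDist (ω (y - z))) := by
  rw [← toDist_antitone.map_min]
  exact toDist_antitone (sub_add_sub_cancel x y z ▸ hadd _ _)

end ValuedSpace

lemma val_inv_eq_zero {K : Type*} [Field K] {ν : K → WithTop ℝ}
    (hmul : ∀ x y, ν (x * y) = ν x + ν y) {a : K} (ha : a ≠ 0) (hνa : ν a = 0) : ν a⁻¹ = 0 := by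
  have hone : ν a = ν a + ν 1 := by rw [← hmul, mul_one]
  have hinv : ν 1 = ν a + ν a⁻¹ := by rw [← hmul, mul_inv_cancel₀ ha]
  rw [hνa, zero_add] at hone hinv
  rw [← hinv, ← hone]

section Symmetrization

variable {K V : Type*} [Field K] [AddCommGroup V] [Module K V] (σ : V →+ V)

lemma map_inv_two_smul_add_self (hσ2 : ∀ x, σ ((2 : K)⁻¹ • x) = (2 : K)⁻¹ • σ x)
    (hσinv : ∀ x, σ (σ x) = x) (x : V) :
    σ ((2 : K)⁻¹ • (x + σ x)) = (2 : K)⁻¹ • (x + σ x) := by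
  rw [hσ2, map_add, hσinv, add_comm]

lemma sub_inv_two_smul_add_self (h2 : (2 : K) ≠ 0) {a : V} (ha : σ a = a) (x : V) :
    a - (2 : K)⁻¹ • (x + σ x) = (2 : K)⁻¹ • ((a - x) + σ (a - x)) := by
  have hsum : (a - x) + (a - σ x) = (2 : K) • a - (x + σ x) := by rw [two_smul]; abel
  rw [map_sub, ha, hsum, smul_sub, inv_smul_smul₀ h2]

lemma le_val_sub_inv_two_smul_add_self (h2 : (2 : K) ≠ 0) {ω : V → WithTop ℝ}
    (hω2 : ∀ x, ω ((2 : K)⁻¹ • x) = ω x) (hadd : ∀ x y, min (ω x) (ω y) ≤ ω (x + y))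
    (hσω : ∀ x, ω (σ x) = ω x) {a : V} (ha : σ a = a) (x : V) :
    ω (a - x) ≤ ω (a - (2 : K)⁻¹ • (x + σ x)) := by
  rw [sub_inv_two_smul_add_self σ h2 ha, hω2]
  simpa only [hσω, min_self] using hadd (a - x) (σ (a - x))

end Symmetrization

theorem MCprime_fixed_subspace_general {K V : Type*} [Field K]
    [AddCommGroup V] [Module K V]
    (hchar : (2 : K) ≠ 0)
    (ν : K → WithTop ℝ)
    (hνmul : ∀ x y : K, ν (x * y) = ν x + ν y)
    (hν2 : ν (2 : K) = 0)
    (F : Subfield K)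
    (m : ℝ)
    (ω : V → WithTop ℝ)
    (hω1 : ∀ x : V, ω x = ⊤ ↔ x = 0)
    (hω2 : ∀ (x : V) (l : K), ω (l • x) = ω x + (m : WithTop ℝ) * ν l)
    (hω3neg : ∀ x : V, ω (-x) = ω x)
    (hω3 : ∀ x y : V, min (ω x) (ω y) ≤ ω (x + y))
    (σ : V → V)
    (hσadd : ∀ x y : V, σ (x + y) = σ x + σ y)
    (hσsmul : ∀ c : K, c ∈ F → ∀ x : V, σ (c • x) = c • σ x)
    (hσinv : ∀ x : V, σ (σ x) = x)
    (hσω : ∀ x : V, ω (σ x) = ω x)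
    (hMC : MCprime (fun x y : V => toDist (ω (x - y)))) :
    MCprimeOn (fun x y : V => toDist (ω (x - y))) {v : V | σ v = v} := by
  let σ' : V →+ V := AddMonoidHom.mk' σ hσadd
  have hω_half (x : V) : ω ((2 : K)⁻¹ • x) = ω x := by
    rw [hω2, val_inv_eq_zero hνmul hchar hν2, mul_zero, add_zero]
  have hσ_half : ∀ x, σ' ((2 : K)⁻¹ • x) = (2 : K)⁻¹ • σ' x :=
    hσsmul _ (F.inv_mem (ofNat_mem F 2))
  exact MCprimeOn_of_retraction (toDist_sub_self ((hω1 0).mpr rfl)) (toDist_sub_comm hω3neg)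
    (toDist_sub_le_max hω3) (fun x => (2 : K)⁻¹ • (x + σ' x))
    (map_inv_two_smul_add_self σ' hσ_half hσinv)
    (fun a ha x => toDist_antitone
      (le_val_sub_inv_two_smul_add_self σ' hchar hω_half hω3 hσω ha x)) hMC

/-- Let `K` be a field with a valuation `ν` of residue characteristic
different from 2, `F` a subfield of `K`, `V` a `K`-vector space with a valuation-like map
`ω` satisfying (1)–(3), and `σ : V → V` an `F`-linear involution preserving `ω`. If `(V, d)`
satisfies (MC′), then the metric subspace on `V_σ = {v | σ v = v}` satisfies (MC′). -/
theorem MCprime_fixed_subspace {K V : Type*} [Field K]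
    [AddCommGroup V] [Module K V]
    (hchar : (2 : K) ≠ 0)
    (ν : K → WithTop ℝ)
    (hν1 : ∀ x : K, ν x = ⊤ ↔ x = 0)
    (hνmul : ∀ x y : K, ν (x * y) = ν x + ν y)
    (hνadd : ∀ x y : K, min (ν x) (ν y) ≤ ν (x + y))
    (hν2 : ν (2 : K) = 0)
    (F : Subfield K)
    (m : ℝ) (hm : 0 < m)
    (ω : V → WithTop ℝ)
    (hω1 : ∀ x : V, ω x = ⊤ ↔ x = 0)
    (hω2 : ∀ (x : V) (l : K), ω (l • x) = ω x + (m : WithTop ℝ) * ν l)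
    (hω3neg : ∀ x : V, ω (-x) = ω x)
    (hω3 : ∀ x y : V, min (ω x) (ω y) ≤ ω (x + y))
    (σ : V → V)
    (hσadd : ∀ x y : V, σ (x + y) = σ x + σ y)
    (hσsmul : ∀ c : K, c ∈ F → ∀ x : V, σ (c • x) = c • σ x)
    (hσinv : ∀ x : V, σ (σ x) = x)
    (hσω : ∀ x : V, ω (σ x) = ω x)
    (hMC : MCprime (fun x y : V => toDist (ω (x - y)))) :
    MCprimeOn (fun x y : V => toDist (ω (x - y))) {v : V | σ v = v} :=
  MCprime_fixed_subspace_general hchar ν hνmul hν2 F m ω hω1 hω2 hω3neg hω3 σ hσadd hσsmul hσinv hσω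
    hMC
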